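/- Under identity removal, if (g,≺) is a gflow for (G,I,O,λ) and u,v ∈ V∖O, w ∈ V satisfy N_G(v) = {u,w}, u ∉ N_G(w), and λ(u),λ(v) ≠ YZ, then the labelled open graph on G ⋊_v w := ((G∧uv)∖{u})∖{v} (with I, O, and λ restricted) has a gflow. -/

import Mathlib

open Set

/-- The three measurement planes. -/
inductive MPlane | XY | XZ | YZ
deriving DecidableEq

/-- The odd neighbourhood of a set `K`: vertices with an odd number of neighbours in `K`. -/
def oddNbhd {V : Type*} (G : SimpleGraph V) (K : Set V) : Set V :=
  {u | Odd (K ∩ G.neighborSet u).ncard}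

/-- `(g, prec)` is a gflow for the labelled open graph `(G, I, O, lam)`. -/
structure GFlow {V : Type*} (G : SimpleGraph V) (I O : Set V) (lam : V → MPlane)
    (g : V → Set V) (prec : V → V → Prop) : Prop where
  irrefl : ∀ v, ¬ prec v v
  trans : ∀ u v w, prec u v → prec v w → prec u w
  noInput : ∀ v, v ∉ O → g v ∩ I = ∅
  g1 : ∀ v, v ∉ O → ∀ w ∈ g v, w ≠ v → prec v w
  g2 : ∀ v, v ∉ O → ∀ w ∈ oddNbhd G (g v), w ≠ v → prec v w
  gXY : ∀ v, v ∉ O → lam v = MPlane.XY → v ∉ g v ∧ v ∈ oddNbhd G (g v)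
  gXZ : ∀ v, v ∉ O → lam v = MPlane.XZ → v ∈ g v ∧ v ∈ oddNbhd G (g v)
  gYZ : ∀ v, v ∉ O → lam v = MPlane.YZ → v ∈ g v ∧ v ∉ oddNbhd G (g v)

/-- Local complementation of `G` about the vertex `u`: complement the edges
among the neighbours of `u`. -/
def localComp {V : Type*} (G : SimpleGraph V) (u : V) : SimpleGraph V where
  Adj x y := x ≠ y ∧ Xor' (G.Adj x y) (G.Adj u x ∧ G.Adj u y)
  symm := by
    constructor
    rintro x y ⟨hxy, h⟩
    refine ⟨hxy.symm, ?_⟩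
    rw [G.adj_comm y x, and_comm]
    exact h
  loopless := by constructor; rintro x ⟨h, _⟩; exact h rfl

/-- The pivot of `G` about the edge `u ∼ v`. -/
def pivot {V : Type*} (G : SimpleGraph V) (u v : V) : SimpleGraph V :=
  localComp (localComp (localComp G u) v) u

/-! Pivoting about `u ∼ v` exchanges, on `{u, v}`, the roles of a correction set `K` and of its
odd neighbourhood: in `G ∧ uv` the set `K ∆ ({u, v} ∩ (K ∆ Odd K))` has odd neighbourhood
`Odd K ∆ ({u, v} ∩ (Odd K ∆ K))`. Hence a gflow of `G` yields one of `G ∧ uv` with the same order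
and with the planes XY and YZ of `u` and `v` exchanged. As `λ(u), λ(v) ≠ YZ`, after the pivot
`a ∈ g a` for `a = u, v`; replacing every correction set containing `a` by its symmetric difference
with `g a` keeps the order and removes `a` from all correction sets, so that `u` and `v` can be
declared outputs and then deleted. -/

open scoped symmDiff

theorem Set.mem_symmDiff_iff_xor {α : Type*} {s t : Set α} {x : α} :
    x ∈ s ∆ t ↔ Xor (x ∈ s) (x ∈ t) := Iff.rfl

theorem Set.mem_symmDiff_inter_symmDiff_of_mem {α : Type*} {A B X : Set α} {y : α} (hy : y ∈ X) :
    y ∈ A ∆ (X ∩ (A ∆ B)) ↔ y ∈ B := by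
  simp only [mem_symmDiff_iff_xor, mem_inter_iff, hy, true_and, xor_def]
  tauto

theorem Set.mem_symmDiff_inter_symmDiff_of_notMem {α : Type*} {A B X : Set α} {y : α}
    (hy : y ∉ X) : y ∈ A ∆ (X ∩ (A ∆ B)) ↔ y ∈ A := by
  simp only [mem_symmDiff_iff_xor, mem_inter_iff, hy, false_and, xor_def]
  tauto

theorem Set.odd_ncard_symmDiff {α : Type*} {A B : Set α} (hA : A.Finite) (hB : B.Finite) :
    Odd (A ∆ B).ncard ↔ Xor (Odd A.ncard) (Odd B.ncard) := by
  have hAB : (A ∆ B).ncard = (A \ B).ncard + (B \ A).ncard :=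
    ncard_union_eq disjoint_sdiff_sdiff hA.sdiff hB.sdiff
  have hA' := ncard_inter_add_ncard_sdiff_eq_ncard A B hA
  have hB' := ncard_inter_add_ncard_sdiff_eq_ncard B A hB
  rw [inter_comm] at hB'
  simp only [Nat.odd_iff, xor_def]
  omega

theorem Set.odd_ncard_inter_singleton {α : Type*} (K : Set α) (a : α) :
    Odd (K ∩ {a}).ncard ↔ a ∈ K := by
  by_cases ha : a ∈ K
  · simp [inter_singleton_of_mem ha, ha]
  · simp [inter_singleton_eq_empty.mpr ha, ha]

section OddNbhd

variable {V : Type*} (G : SimpleGraph V)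

theorem mem_oddNbhd {K : Set V} {x : V} :
    x ∈ oddNbhd G K ↔ Odd (K ∩ G.neighborSet x).ncard := Iff.rfl

theorem mem_oddNbhd_symmDiff [Finite V] (K L : Set V) (x : V) :
    x ∈ oddNbhd G (K ∆ L) ↔ Xor (x ∈ oddNbhd G K) (x ∈ oddNbhd G L) := by
  rw [mem_oddNbhd, inter_symmDiff_distrib_right, odd_ncard_symmDiff (toFinite _) (toFinite _)]
  rfl

theorem mem_oddNbhd_pair_inter [Finite V] {u v : V} (huv : u ≠ v) (S : Set V) (x : V) :
    x ∈ oddNbhd G ({u, v} ∩ S) ↔ Xor (u ∈ S ∧ G.Adj x u) (v ∈ S ∧ G.Adj x v) := by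
  have hsplit : ({u, v} ∩ S : Set V) = ({u} ∩ S) ∆ ({v} ∩ S) := by
    ext y
    simp only [mem_inter_iff, mem_insert_iff, mem_singleton_iff, mem_symmDiff]
    grind
  rw [hsplit, mem_oddNbhd_symmDiff, mem_oddNbhd, mem_oddNbhd, inter_assoc, inter_assoc,
    inter_comm, odd_ncard_inter_singleton, inter_comm {v}, odd_ncard_inter_singleton]
  rfl

theorem localComp_adj {a x y : V} :
    (localComp G a).Adj x y ↔ x ≠ y ∧ Xor (G.Adj x y) (G.Adj a x ∧ G.Adj a y) := Iff.rfl

theorem neighborSet_localComp_of_adj {a x : V} (hax : G.Adj a x) :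
    (localComp G a).neighborSet x = G.neighborSet x ∆ (G.neighborSet a ∆ {x}) := by
  ext y
  simp only [SimpleGraph.mem_neighborSet, localComp_adj, mem_symmDiff, mem_singleton_iff, xor_def]
  grind [SimpleGraph.Adj.ne]

theorem neighborSet_localComp_of_not_adj {a x : V} (hax : ¬ G.Adj a x) :
    (localComp G a).neighborSet x = G.neighborSet x := by
  ext y
  simp only [SimpleGraph.mem_neighborSet, localComp_adj, hax, false_and]
  grind [SimpleGraph.Adj.ne]

theorem mem_oddNbhd_localComp [Finite V] (a x : V) (K : Set V) :
    x ∈ oddNbhd (localComp G a) K ↔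
      Xor (x ∈ oddNbhd G K) (G.Adj a x ∧ Xor (a ∈ oddNbhd G K) (x ∈ K)) := by
  by_cases hax : G.Adj a x
  · rw [mem_oddNbhd, neighborSet_localComp_of_adj G hax, inter_symmDiff_distrib_left,
      inter_symmDiff_distrib_left, odd_ncard_symmDiff (toFinite _) (toFinite _),
      odd_ncard_symmDiff (toFinite _) (toFinite _), odd_ncard_inter_singleton]
    simp only [hax, true_and]
    rfl
  · simp [mem_oddNbhd, neighborSet_localComp_of_not_adj G hax, hax, xor_def]

def pivotCorrection (u v : V) (K : Set V) : Set V :=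
  K ∆ ({u, v} ∩ (K ∆ oddNbhd G K))

theorem oddNbhd_pivot_pivotCorrection [Finite V] {u v : V} (huv : G.Adj u v) (K : Set V) :
    oddNbhd (pivot G u v) (pivotCorrection G u v K) =
      oddNbhd G K ∆ ({u, v} ∩ (oddNbhd G K ∆ K)) := by
  ext x
  have hvu := huv.symm
  have hnuv := huv.ne
  simp only [pivot, pivotCorrection, mem_oddNbhd_localComp, localComp_adj, mem_oddNbhd_symmDiff,
    mem_oddNbhd_pair_inter G huv.ne, mem_symmDiff_iff_xor, mem_inter_iff, mem_insert_iff,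
    mem_singleton_iff, huv, hvu, hnuv, hnuv.symm, SimpleGraph.irrefl, G.adj_comm x, true_and,
    false_and, and_false]
  -- what is left is a Boolean identity in the memberships of `x`, `u`, `v` in `K` and in
  -- `oddNbhd G K` and in the adjacencies of `x` to `u` and `v`
  rcases eq_or_ne x u with rfl | hxu
  · by_cases h1 : x ∈ K <;> by_cases h2 : x ∈ oddNbhd G K <;> by_cases h3 : v ∈ K <;>
      by_cases h4 : v ∈ oddNbhd G K <;> simp [h1, h2, h3, h4, xor_def, hnuv, hnuv.symm, hvu]
  rcases eq_or_ne x v with rfl | hxv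
  · by_cases h1 : x ∈ K <;> by_cases h2 : x ∈ oddNbhd G K <;> by_cases h3 : u ∈ K <;>
      by_cases h4 : u ∈ oddNbhd G K <;> simp [h1, h2, h3, h4, xor_def, hnuv, hnuv.symm, huv]
  by_cases h1 : x ∈ K <;> by_cases h2 : x ∈ oddNbhd G K <;> by_cases h3 : u ∈ K <;>
    by_cases h4 : u ∈ oddNbhd G K <;> by_cases h5 : v ∈ K <;> by_cases h6 : v ∈ oddNbhd G K <;>
    by_cases h7 : G.Adj u x <;> by_cases h8 : G.Adj v x <;>
    simp [h1, h2, h3, h4, h5, h6, h7, h8, xor_def, hxu, hxv, hxu.symm, hxv.symm, hnuv.symm]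

end OddNbhd

namespace MPlane

def Holds : MPlane → Prop → Prop → Prop
  | XY, inK, inOdd => ¬ inK ∧ inOdd
  | XZ, inK, inOdd => inK ∧ inOdd
  | YZ, inK, inOdd => inK ∧ ¬ inOdd

def pivotSwap : MPlane → MPlane
  | XY => YZ
  | XZ => XZ
  | YZ => XY

theorem holds_pivotSwap (p : MPlane) (a b : Prop) : p.pivotSwap.Holds a b ↔ p.Holds b a := by
  cases p <;> simp only [pivotSwap, Holds] <;> tauto

theorem pivotSwap_ne_XY {p : MPlane} (hp : p ≠ YZ) : p.pivotSwap ≠ XY := by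
  cases p <;> simp_all [pivotSwap]

theorem Holds.left {p : MPlane} {a b : Prop} (hp : p ≠ XY) (h : p.Holds a b) : a := by
  cases p
  · exact absurd rfl hp
  · exact h.1
  · exact h.1

end MPlane

open Classical in
noncomputable def pivotPlanes {V : Type*} (lam : V → MPlane) (u v x : V) : MPlane :=
  if x ∈ ({u, v} : Set V) then (lam x).pivotSwap else lam x

section Correction

variable {V : Type*} {G : SimpleGraph V} {I : Set V} {prec : V → V → Prop}

variable (G I prec) in
structure IsCorrection (p : MPlane) (x : V) (K : Set V) : Prop where
  inter_inputs : K ∩ I = ∅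
  prec_of_mem : ∀ y ∈ K, y ≠ x → prec x y
  prec_of_mem_oddNbhd : ∀ y ∈ oddNbhd G K, y ≠ x → prec x y
  holds : p.Holds (x ∈ K) (x ∈ oddNbhd G K)

theorem IsCorrection.symmDiff [Finite V] {p q : MPlane} {x a : V} {K L : Set V}
    (hK : IsCorrection G I prec p x K) (hL : IsCorrection G I prec q a L)
    (irrefl : ∀ y, ¬ prec y y) (trans : ∀ y z t, prec y z → prec z t → prec y t)
    (hxa : prec x a) : IsCorrection G I prec p x (K ∆ L) := by
  have hafter : ∀ y, (y ∈ L ∨ y ∈ oddNbhd G L) → prec x y := by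
    rintro y hy
    rcases eq_or_ne y a with rfl | hya
    · exact hxa
    · rcases hy with hy | hy
      exacts [trans _ _ _ hxa (hL.prec_of_mem y hy hya),
        trans _ _ _ hxa (hL.prec_of_mem_oddNbhd y hy hya)]
  have hxL : x ∉ L := fun hx => irrefl x (hafter x (.inl hx))
  have hxOL : x ∉ oddNbhd G L := fun hx => irrefl x (hafter x (.inr hx))
  refine ⟨?_, fun y hy hyx => ?_, fun y hy hyx => ?_, ?_⟩
  · refine eq_empty_iff_forall_notMem.mpr fun y ⟨hy, hyI⟩ => ?_
    rcases hy with ⟨hyK, -⟩ | ⟨hyL, -⟩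
    exacts [hK.inter_inputs.subset ⟨hyK, hyI⟩, hL.inter_inputs.subset ⟨hyL, hyI⟩]
  · rcases hy with ⟨hyK, -⟩ | ⟨hyL, -⟩
    exacts [hK.prec_of_mem y hyK hyx, hafter y (.inl hyL)]
  · rcases (mem_oddNbhd_symmDiff G K L y).mp hy with ⟨hyK, -⟩ | ⟨hyL, -⟩
    exacts [hK.prec_of_mem_oddNbhd y hyK hyx, hafter y (.inr hyL)]
  · rw [mem_symmDiff_iff_xor, mem_oddNbhd_symmDiff]
    simpa [xor_def, hxL, hxOL] using hK.holds

theorem IsCorrection.pivot [Finite V] {u v : V} (huv : G.Adj u v) {lam : V → MPlane} {x : V}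
    {K : Set V} (hK : IsCorrection G I prec (lam x) x K) :
    IsCorrection (pivot G u v) (I \ {u, v}) prec (pivotPlanes lam u v x) x
      (pivotCorrection G u v K) := by
  have hodd := oddNbhd_pivot_pivotCorrection G huv K
  have hprec : ∀ y, (y ∈ K ∨ y ∈ oddNbhd G K) → y ≠ x → prec x y := fun y hy hyx =>
    hy.elim (hK.prec_of_mem y · hyx) (hK.prec_of_mem_oddNbhd y · hyx)
  refine ⟨?_, fun y hy hyx => ?_, fun y hy hyx => ?_, ?_⟩
  · refine eq_empty_iff_forall_notMem.mpr fun y ⟨hy, hyI, hyX⟩ => ?_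
    rw [pivotCorrection, mem_symmDiff_inter_symmDiff_of_notMem hyX] at hy
    exact hK.inter_inputs.subset ⟨hy, hyI⟩
  · by_cases hyX : y ∈ ({u, v} : Set V)
    · rw [pivotCorrection, mem_symmDiff_inter_symmDiff_of_mem hyX] at hy
      exact hprec y (.inr hy) hyx
    · rw [pivotCorrection, mem_symmDiff_inter_symmDiff_of_notMem hyX] at hy
      exact hprec y (.inl hy) hyx
  · by_cases hyX : y ∈ ({u, v} : Set V)
    · rw [hodd, mem_symmDiff_inter_symmDiff_of_mem hyX] at hy
      exact hprec y (.inl hy) hyx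
    · rw [hodd, mem_symmDiff_inter_symmDiff_of_notMem hyX] at hy
      exact hprec y (.inr hy) hyx
  · unfold pivotPlanes
    split_ifs with hxX
    · rw [MPlane.holds_pivotSwap, hodd, pivotCorrection, mem_symmDiff_inter_symmDiff_of_mem hxX,
        mem_symmDiff_inter_symmDiff_of_mem hxX]
      exact hK.holds
    · rw [hodd, pivotCorrection, mem_symmDiff_inter_symmDiff_of_notMem hxX,
        mem_symmDiff_inter_symmDiff_of_notMem hxX]
      exact hK.holds

theorem mem_oddNbhd_induce {S K : Set V} (hK : K ⊆ S) (x : S) :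
    x ∈ oddNbhd (G.induce S) (Subtype.val ⁻¹' K) ↔ x.val ∈ oddNbhd G K := by
  have himage : Subtype.val '' (Subtype.val ⁻¹' K ∩ (G.induce S).neighborSet x) =
      K ∩ G.neighborSet x := by
    ext y
    constructor
    · rintro ⟨y, ⟨hyK, hy⟩, rfl⟩
      exact ⟨hyK, hy⟩
    · rintro ⟨hyK, hy⟩
      exact ⟨⟨y, hK hyK⟩, ⟨hyK, hy⟩, rfl⟩
  rw [mem_oddNbhd, mem_oddNbhd, ← himage, ncard_image_of_injective _ Subtype.val_injective]

theorem IsCorrection.induce {S : Set V} {p : MPlane} {x : S} {K : Set V} (hKS : K ⊆ S)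
    (hK : IsCorrection G I prec p x K) :
    IsCorrection (G.induce S) (Subtype.val ⁻¹' I) (fun y z => prec y z) p x
      (Subtype.val ⁻¹' K) := by
  refine ⟨?_, fun y hy hyx => ?_, fun y hy hyx => ?_, ?_⟩
  · exact eq_empty_iff_forall_notMem.mpr fun y hy => hK.inter_inputs.subset hy
  · exact hK.prec_of_mem y hy (Subtype.coe_injective.ne hyx)
  · rw [mem_oddNbhd_induce hKS] at hy
    exact hK.prec_of_mem_oddNbhd y hy (Subtype.coe_injective.ne hyx)
  · rw [mem_oddNbhd_induce hKS]
    exact hK.holds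

end Correction

section Avoid

variable {V : Type*} {g : V → Set V}

open Classical in
noncomputable def avoid (g : V → Set V) (a x : V) : Set V :=
  if a ∈ g x then g x ∆ g a else g x

theorem notMem_avoid {a : V} (ha : a ∈ g a) (x : V) : a ∉ avoid g a x := by
  unfold avoid
  split_ifs with hax
  · simp [mem_symmDiff_iff_xor, hax, ha]
  · exact hax

theorem notMem_avoid_of_notMem {a b x : V} (hbx : b ∉ g x) (hba : b ∉ g a) :
    b ∉ avoid g a x := by
  unfold avoid
  split_ifs
  · simp [mem_symmDiff_iff_xor, hbx, hba]
  · exact hbx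

end Avoid

namespace GFlow

variable {V : Type*} {G : SimpleGraph V} {I O : Set V} {lam : V → MPlane} {g : V → Set V}
  {prec : V → V → Prop}

theorem isCorrection (h : GFlow G I O lam g prec) {x : V} (hx : x ∉ O) :
    IsCorrection G I prec (lam x) x (g x) := by
  refine ⟨h.noInput x hx, h.g1 x hx, h.g2 x hx, ?_⟩
  cases hl : lam x
  exacts [h.gXY x hx hl, h.gXZ x hx hl, h.gYZ x hx hl]

theorem of_isCorrection (irrefl : ∀ x, ¬ prec x x)
    (trans : ∀ x y z, prec x y → prec y z → prec x z)
    (hg : ∀ x, x ∉ O → IsCorrection G I prec (lam x) x (g x)) : GFlow G I O lam g prec where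
  irrefl := irrefl
  trans := trans
  noInput x hx := (hg x hx).inter_inputs
  g1 x hx := (hg x hx).prec_of_mem
  g2 x hx := (hg x hx).prec_of_mem_oddNbhd
  gXY x hx hl := by simpa [hl, MPlane.Holds] using (hg x hx).holds
  gXZ x hx hl := by simpa [hl, MPlane.Holds] using (hg x hx).holds
  gYZ x hx hl := by simpa [hl, MPlane.Holds] using (hg x hx).holds

theorem mem_self (h : GFlow G I O lam g prec) {x : V} (hx : x ∉ O) (hl : lam x ≠ .XY) :
    x ∈ g x :=
  (h.isCorrection hx).holds.left hl

theorem pivot [Finite V] (h : GFlow G I O lam g prec) {u v : V} (huv : G.Adj u v) :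
    GFlow (pivot G u v) (I \ {u, v}) O (pivotPlanes lam u v)
      (fun x => pivotCorrection G u v (g x)) prec :=
  of_isCorrection h.irrefl h.trans fun _ hx => (h.isCorrection hx).pivot huv

theorem avoid [Finite V] (h : GFlow G I O lam g prec) {a : V} (ha : a ∉ O) :
    GFlow G I (insert a O) lam (avoid g a) prec := by
  refine of_isCorrection h.irrefl h.trans fun x hx => ?_
  rw [mem_insert_iff, not_or] at hx
  unfold _root_.avoid
  split_ifs with hax
  · exact (h.isCorrection hx.2).symmDiff (h.isCorrection ha) h.irrefl h.trans
      (h.g1 x hx.2 a hax (Ne.symm hx.1))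
  · exact h.isCorrection hx.2

theorem induce (h : GFlow G I O lam g prec) {S : Set V} (hS : ∀ x ∈ S, x ∉ O → g x ⊆ S) :
    GFlow (G.induce S) (Subtype.val ⁻¹' I) (Subtype.val ⁻¹' O) (fun x => lam x)
      (fun x => Subtype.val ⁻¹' g x) (fun x y => prec x y) :=
  of_isCorrection (fun x => h.irrefl x) (fun x y z => h.trans x y z) fun x hx =>
    (h.isCorrection hx).induce (hS x x.2 hx)

end GFlow

theorem gflow_identity_removal_general {V : Type*} [Fintype V]
    (G : SimpleGraph V) (I O : Set V) (lam : V → MPlane)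
    (g : V → Set V) (prec : V → V → Prop)
    (h : GFlow G I O lam g prec) (u v w : V) (hu : u ∉ O) (hv : v ∉ O)
    (hN : G.neighborSet v = {u, w})
    (hlu : lam u ≠ MPlane.YZ) (hlv : lam v ≠ MPlane.YZ) :
    ∃ (g' : ↥{x : V | x ≠ u ∧ x ≠ v} → Set ↥{x : V | x ≠ u ∧ x ≠ v})
      (prec' : ↥{x : V | x ≠ u ∧ x ≠ v} → ↥{x : V | x ≠ u ∧ x ≠ v} → Prop),
      GFlow ((pivot G u v).induce {x : V | x ≠ u ∧ x ≠ v})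
        (Subtype.val ⁻¹' I) (Subtype.val ⁻¹' O)
        (fun z => lam z.val) g' prec' := by
  have huv : G.Adj u v := (show u ∈ G.neighborSet v by simp [hN]).symm
  have hv' : v ∉ insert u O := by simp [hv, huv.ne.symm]
  have hP := h.pivot huv
  have hPu := hP.avoid hu
  have hPuv := hPu.avoid hv'
  have huu := hP.mem_self hu (by simpa [pivotPlanes] using MPlane.pivotSwap_ne_XY hlu)
  have hvv := hPu.mem_self hv' (by simpa [pivotPlanes] using MPlane.pivotSwap_ne_XY hlv)
  have hS : ∀ x ∈ {x : V | x ≠ u ∧ x ≠ v}, x ∉ insert v (insert u O) →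
      avoid (avoid (fun x => pivotCorrection G u v (g x)) u) v x ⊆ {x : V | x ≠ u ∧ x ≠ v} :=
    fun x _ _ y hy => ⟨fun hyu => notMem_avoid_of_notMem (notMem_avoid huu x) (notMem_avoid huu v)
      (hyu ▸ hy), fun hyv => notMem_avoid hvv x (hyv ▸ hy)⟩
  exact ⟨_, _, by
    convert hPuv.induce hS using 1 <;> ext ⟨x, hxu, hxv⟩ <;> simp [pivotPlanes, hxu, hxv]⟩

/-- Identity removal preserves the existence of gflow: if `v` has exactly the
neighbours `u` and `w`, `u ∉ N(w)`, and `λ(u), λ(v) ≠ YZ`, then the labelled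
open graph on `G ⋊_v w := ((G ∧ uv) ∖ {u}) ∖ {v}` has a gflow. -/
theorem gflow_identity_removal {V : Type*} [Fintype V]
    (G : SimpleGraph V) (I O : Set V) (lam : V → MPlane)
    (g : V → Set V) (prec : V → V → Prop)
    (h : GFlow G I O lam g prec) (u v w : V) (hu : u ∉ O) (hv : v ∉ O)
    (hN : G.neighborSet v = {u, w}) (hw : u ∉ G.neighborSet w)
    (hlu : lam u ≠ MPlane.YZ) (hlv : lam v ≠ MPlane.YZ) :
    ∃ (g' : ↥{x : V | x ≠ u ∧ x ≠ v} → Set ↥{x : V | x ≠ u ∧ x ≠ v})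
      (prec' : ↥{x : V | x ≠ u ∧ x ≠ v} → ↥{x : V | x ≠ u ∧ x ≠ v} → Prop),
      GFlow ((pivot G u v).induce {x : V | x ≠ u ∧ x ≠ v})
        (Subtype.val ⁻¹' I) (Subtype.val ⁻¹' O)
        (fun z => lam z.val) g' prec' :=
  gflow_identity_removal_general G I O lam g prec h u v w hu hv hN hlu hlv
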